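/- arXiv:2308.13054 — 2 statements merged into one kernel-verified Lean document; each statement's English description precedes it below -/
import Mathlib

section
/- For any α_H > 1 and α_G > 1, there exists an n-node directed acyclic graph G with positive edge weights such that every positive reweighting H of G with the property that every α_H-approximate shortest path in H is an α_G-approximate shortest path in G, has aspect ratio at least (α_H)^{c√n} for an absolute constant c > 0. -/
/-- The weight of a path (list of vertices): sum of weights of consecutive edges. -/
def pathWeight {V : Type} (w : V → V → ℝ) : List V → ℝ
  | [] => 0
  | [_] => 0
  | a :: b :: rest => w a b + pathWeight w (b :: rest)

/-- A nonempty list of vertices is a path if consecutive vertices are joined by edges. -/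
def IsPath {V : Type} (E : V → V → Prop) : List V → Prop
  | [] => False
  | [_] => True
  | a :: b :: rest => E a b ∧ IsPath E (b :: rest)

/-- `p` is a shortest path: it is a path, and no path with the same endpoints is shorter. -/
def IsShortestPath {V : Type} (E : V → V → Prop) (w : V → V → ℝ) (p : List V) : Prop :=
  IsPath E p ∧ ∀ q : List V, IsPath E q → q.head? = p.head? → q.getLast? = p.getLast? →
    pathWeight w p ≤ pathWeight w q

/-- `p` is an α-approximate shortest path: it is a path whose weight is at
most α times the weight of every path with the same endpoints. -/
def IsApproxSP {V : Type} (E : V → V → Prop) (w : V → V → ℝ) (α : ℝ) (p : List V) : Prop :=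
  IsPath E p ∧ ∀ q : List V, IsPath E q → q.head? = p.head? → q.getLast? = p.getLast? →
    pathWeight w p ≤ α * pathWeight w q

/-- grid edge relation on `Fin n` with grid side `k`. -/
def gE (n k : ℕ) (i j : Fin n) : Prop :=
  i.val < k*k ∧ j.val < k*k ∧ ((j.val = i.val + 1 ∧ i.val % k + 1 < k) ∨ j.val = i.val + k)

lemma gE_lt {n k : ℕ} (hk : 2 ≤ k) {i j : Fin n} (h : gE n k i j) : i.val < j.val := by
  rcases h with ⟨_, _, h | h⟩ <;> omega

lemma path_le {n k : ℕ} (hk : 2 ≤ k) :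
    ∀ q : List (Fin n), IsPath (gE n k) q → ∀ x y : Fin n,
      q.head? = some x → q.getLast? = some y → x.val ≤ y.val := by
  intro q
  induction q with
  | nil => intro h; exact h.elim
  | cons a tail ih =>
    rcases tail with _ | ⟨b, r⟩
    · intro _ x y hx hy
      simp only [List.head?_cons, Option.some.injEq] at hx
      simp only [List.getLast?_singleton, Option.some.injEq] at hy
      subst hx; subst hy; exact le_rfl
    · intro hp x y hx hy
      rcases hp with ⟨hab, htail⟩
      simp only [List.head?_cons, Option.some.injEq] at hx
      rw [List.getLast?_cons_cons] at hy
      have h1 := ih htail b y rfl hy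
      have h2 := gE_lt hk hab
      omega

/-- path of coordinate-difference 0 is a single vertex -/
lemma path_d0 {n k : ℕ} (hk : 2 ≤ k) (q : List (Fin n)) (hq : IsPath (gE n k) q)
    (x y : Fin n) (hx : q.head? = some x) (hy : q.getLast? = some y)
    (hd : y.val ≤ x.val) : q = [x] := by
  rcases q with _ | ⟨a, _ | ⟨b, r⟩⟩
  · exact hq.elim
  · simp only [List.head?_cons, Option.some.injEq] at hx; rw [hx]
  · rcases hq with ⟨hab, htail⟩
    simp only [List.head?_cons, Option.some.injEq] at hx
    rw [List.getLast?_cons_cons] at hy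
    have h1 := path_le hk _ htail b y rfl hy
    have h2 := gE_lt hk hab
    omega

/-- short path (difference < k) only takes right steps, so column increases exactly. -/
lemma path_mod {n k : ℕ} (hk : 2 ≤ k) :
    ∀ q : List (Fin n), IsPath (gE n k) q → ∀ x y : Fin n,
      q.head? = some x → q.getLast? = some y → y.val < x.val + k →
      x.val % k + (y.val - x.val) = y.val % k := by
  intro q
  induction q with
  | nil => intro h; exact h.elim
  | cons a tail ih =>
    rcases tail with _ | ⟨b, r⟩
    · intro _ x y hx hy _
      simp only [List.head?_cons, Option.some.injEq] at hx
      simp only [List.getLast?_singleton, Option.some.injEq] at hy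
      subst hx; subst hy; simp
    · intro hp x y hx hy hd
      rcases hp with ⟨hab, htail⟩
      simp only [List.head?_cons, Option.some.injEq] at hx
      subst hx
      rw [List.getLast?_cons_cons] at hy
      have hby := path_le hk _ htail b y rfl hy
      rcases hab with ⟨_, _, ⟨he, hguard⟩ | he⟩
      · have hbmod : b.val % k = a.val % k + 1 := by
          rw [he, Nat.add_mod, Nat.mod_eq_of_lt (by omega : 1 < k),
            Nat.mod_eq_of_lt hguard]
        have := ih htail b y rfl hy (by omega)
        omega
      · omega

/-- path of difference 1 is a single right edge -/
lemma path_d1 {n k : ℕ} (hk : 2 ≤ k) (q : List (Fin n)) (hq : IsPath (gE n k) q)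
    (x y : Fin n) (hx : q.head? = some x) (hy : q.getLast? = some y)
    (hd : y.val = x.val + 1) : q = [x, y] := by
  rcases q with _ | ⟨a, _ | ⟨b, r⟩⟩
  · exact hq.elim
  · simp only [List.head?_cons, Option.some.injEq] at hx
    simp only [List.getLast?_singleton, Option.some.injEq] at hy
    subst hx; subst hy; omega
  · rcases hq with ⟨hab, htail⟩
    simp only [List.head?_cons, Option.some.injEq] at hx
    subst hx
    rw [List.getLast?_cons_cons] at hy
    have hby := path_le hk _ htail b y rfl hy
    rcases hab with ⟨_, _, ⟨he, hguard⟩ | he⟩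
    · have h0 := path_d0 hk _ htail b y rfl hy (by omega)
      have hb : b = y := by
        rw [h0] at hy
        simpa using hy
      rw [h0, hb]
    · omega

/-- path of difference k is a single down edge -/
lemma path_dk {n k : ℕ} (hk : 2 ≤ k) (q : List (Fin n)) (hq : IsPath (gE n k) q)
    (x y : Fin n) (hx : q.head? = some x) (hy : q.getLast? = some y)
    (hd : y.val = x.val + k) : q = [x, y] := by
  rcases q with _ | ⟨a, _ | ⟨b, r⟩⟩
  · exact hq.elim
  · simp only [List.head?_cons, Option.some.injEq] at hx
    simp only [List.getLast?_singleton, Option.some.injEq] at hy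
    subst hx; subst hy; omega
  · rcases hq with ⟨hab, htail⟩
    simp only [List.head?_cons, Option.some.injEq] at hx
    subst hx
    rw [List.getLast?_cons_cons] at hy
    have hby := path_le hk _ htail b y rfl hy
    rcases hab with ⟨_, _, ⟨he, hguard⟩ | he⟩
    · -- right step: remaining difference k-1 < k, forces column wrap contradiction
      have hmod := path_mod hk _ htail b y rfl hy (by omega)
      have hbmod : b.val % k = a.val % k + 1 := by
        rw [he, Nat.add_mod, Nat.mod_eq_of_lt (by omega : 1 < k),
          Nat.mod_eq_of_lt hguard]
      have hymod : y.val % k = a.val % k := by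
        rw [hd, Nat.add_mod_right]
      omega
    · have h0 := path_d0 hk _ htail b y rfl hy (by omega)
      have hb : b = y := by
        rw [h0] at hy
        simpa using hy
      rw [h0, hb]

/-- diamond path enumeration: a path of difference k+1 has exactly one
intermediate vertex, which is either x+1 or x+k. -/
lemma path_diamond {n k : ℕ} (hk : 2 ≤ k) (q : List (Fin n)) (hq : IsPath (gE n k) q)
    (x y : Fin n) (hx : q.head? = some x) (hy : q.getLast? = some y)
    (hd : y.val = x.val + k + 1) :
    ∃ b : Fin n, q = [x, b, y] ∧ (b.val = x.val + 1 ∨ b.val = x.val + k) := by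
  rcases q with _ | ⟨a, _ | ⟨b, r⟩⟩
  · exact hq.elim
  · simp only [List.head?_cons, Option.some.injEq] at hx
    simp only [List.getLast?_singleton, Option.some.injEq] at hy
    subst hx; subst hy; omega
  · rcases hq with ⟨hab, htail⟩
    simp only [List.head?_cons, Option.some.injEq] at hx
    subst hx
    rw [List.getLast?_cons_cons] at hy
    rcases hab with ⟨_, _, ⟨he, hguard⟩ | he⟩
    · have h5 := path_dk hk _ htail b y rfl hy (by omega)
      exact ⟨b, by rw [h5], Or.inl he⟩
    · have h5 := path_d1 hk _ htail b y rfl hy (by omega)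
      exact ⟨b, by rw [h5], Or.inr he⟩

/-- analytic core: from the diamond inequalities and two-sided aspect ratio
bounds, derive both the small and the main exponential bound on `R`. -/
lemma core (αH : ℝ) (hH : 1 < αH) (m : ℕ) (a h : ℕ → ℕ → ℝ) (R μ : ℝ)
    (hμ : μ = a 0 0)
    (hapos : ∀ s c, s ≤ m → c ≤ m+1 → 0 < a s c)
    (hhpos : ∀ s c, s ≤ m+1 → c ≤ m → 0 < h s c)
    (haU : ∀ s c, s ≤ m → c ≤ m+1 → a s c < R * μ)
    (haL : ∀ s c, s ≤ m → c ≤ m+1 → μ < R * a s c)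
    (hhU : ∀ s c, s ≤ m+1 → c ≤ m → h s c < R * μ)
    (hhL : ∀ s c, s ≤ m+1 → c ≤ m → μ < R * h s c)
    (key : ∀ s c, s ≤ m → c ≤ m → αH * (a s c + h (s+1) c) < h s c + a s (c+1)) :
    αH < R^2 ∧ αH^(m+1) < 2*(m+1)*R^2 := by
  have hα0 : (0:ℝ) < αH := by linarith
  have hμpos : 0 < μ := hμ ▸ hapos 0 0 (by omega) (by omega)
  have hRpos : 0 < R := by
    by_contra hR
    push_neg at hR
    have := haU 0 0 (by omega) (by omega)
    nlinarith [hapos 0 0 (by omega) (by omega)]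
  constructor
  · -- SMALL
    have k00 := key 0 0 (by omega) (by omega)
    have b1 := hhU 0 0 (by omega) (by omega)
    have b2 := haU 0 1 (by omega) (by omega)
    have b3 := haL 0 0 (by omega) (by omega)
    have b4 := hhL 1 0 (by omega) (by omega)
    have p1 : 0 < a 0 0 := hapos 0 0 (by omega) (by omega)
    have p2 : 0 < h 1 0 := hhpos 1 0 (by omega) (by omega)
    have hs : αH * (a 0 0 + h 1 0) < 2 * (R*μ) := by linarith
    have ht : 2 * μ < R * (a 0 0 + h 1 0) := by linarith
    have := mul_lt_mul'' hs ht (by positivity) (by positivity)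
    nlinarith [this, mul_pos hμpos (show (0:ℝ) < a 0 0 + h 1 0 by positivity)]
  · -- MAIN
    set Φ : ℕ → ℝ := fun c => ∑ s ∈ Finset.range (m+1), αH ^ s * a s c with hΦ
    have step : ∀ c, c ≤ m → αH * Φ c - R*μ < Φ (c+1) := by
      intro c hc
      have hsum : ∑ s ∈ Finset.range (m+1), αH^s * (αH * (a s c + h (s+1) c))
          < ∑ s ∈ Finset.range (m+1), αH^s * (h s c + a s (c+1)) := by
        refine Finset.sum_lt_sum_of_nonempty (by simp) ?_
        intro s hs
        exact mul_lt_mul_of_pos_left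
          (key s c (by simp at hs; omega) hc) (by positivity)
      have hL : ∑ s ∈ Finset.range (m+1), αH^s * (αH * (a s c + h (s+1) c))
          = αH * Φ c + ∑ s ∈ Finset.range (m+1), αH^(s+1) * h (s+1) c := by
        rw [hΦ, Finset.mul_sum, ← Finset.sum_add_distrib]
        exact Finset.sum_congr rfl (fun s _ => by ring)
      have hRt : ∑ s ∈ Finset.range (m+1), αH^s * (h s c + a s (c+1))
          = (∑ s ∈ Finset.range (m+1), αH^s * h s c) + Φ (c+1) := by
        rw [hΦ, ← Finset.sum_add_distrib]
        exact Finset.sum_congr rfl (fun s _ => by ring)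
      have hT : (∑ s ∈ Finset.range (m+1), αH^s * h s c)
          ≤ h 0 c + ∑ s ∈ Finset.range (m+1), αH^(s+1) * h (s+1) c := by
        rw [Finset.sum_range_succ' (fun s => αH^s * h s c) m,
          Finset.sum_range_succ (fun s => αH^(s+1) * h (s+1) c) m]
        have : 0 ≤ αH^(m+1) * h (m+1) c := by
          have := hhpos (m+1) c (by omega) hc
          positivity
        simp only [pow_zero, one_mul]
        linarith
      have hh0 := hhU 0 c (by omega) hc
      rw [hL, hRt] at hsum
      linarith
    have unroll : ∀ c, c ≤ m+1 →
        αH^c * Φ 0 - (∑ i ∈ Finset.range c, αH^i) * (R*μ) ≤ Φ c := by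
      intro c
      induction c with
      | zero => intro _; simp
      | succ c ih =>
        intro hc
        have hc' : c ≤ m := by omega
        have h1 := ih (by omega)
        have h2 := step c hc'
        have h3 : αH * (αH^c * Φ 0 - (∑ i ∈ Finset.range c, αH^i) * (R*μ))
            ≤ αH * Φ c := mul_le_mul_of_nonneg_left h1 (le_of_lt hα0)
        have hS : (∑ i ∈ Finset.range (c+1), αH^i)
            = αH * (∑ i ∈ Finset.range c, αH^i) + 1 := by
          rw [Finset.sum_range_succ' (fun i => αH^i) c, Finset.mul_sum]
          simp only [pow_zero]
          exact congrArg (· + 1) (Finset.sum_congr rfl (fun i _ => by ring))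
        rw [hS]
        calc αH^(c+1) * Φ 0 - (αH * (∑ i ∈ Finset.range c, αH^i) + 1) * (R*μ)
            = αH * (αH^c * Φ 0 - (∑ i ∈ Finset.range c, αH^i) * (R*μ)) - R*μ := by ring
          _ ≤ αH * Φ c - R*μ := by linarith
          _ ≤ Φ (c+1) := le_of_lt h2
    -- bounds on Φ 0, Φ (m+1), and the geometric sum
    have hΦ0 : αH^m * a m 0 ≤ Φ 0 := by
      refine Finset.single_le_sum (f := fun s => αH^s * a s 0) ?_ (Finset.self_mem_range_succ m)
      intro i hi
      have := hapos i 0 (by simp at hi; omega) (by omega)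
      positivity
    have hΦtop : Φ (m+1) ≤ (m+1) * (αH^m * (R*μ)) := by
      calc Φ (m+1) ≤ ∑ _s ∈ Finset.range (m+1), αH^m * (R*μ) := by
            refine Finset.sum_le_sum ?_
            intro s hs
            have hs' : s ≤ m := by simp at hs; omega
            have hb := haU s (m+1) hs' (by omega)
            have hp := hapos s (m+1) hs' (by omega)
            have e1 : αH^s ≤ αH^m := pow_le_pow_right₀ (le_of_lt hH) hs'
            nlinarith [pow_pos hα0 s, pow_pos hα0 m]
        _ = (m+1) * (αH^m * (R*μ)) := by
            rw [Finset.sum_const, Finset.card_range]; simp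
    have hSsum : (∑ i ∈ Finset.range (m+1), αH^i) ≤ (m+1) * αH^m := by
      calc (∑ i ∈ Finset.range (m+1), αH^i) ≤ ∑ _i ∈ Finset.range (m+1), αH^m := by
            refine Finset.sum_le_sum ?_
            intro i hi
            exact pow_le_pow_right₀ (le_of_lt hH) (by simp at hi; omega)
        _ = (m+1) * αH^m := by rw [Finset.sum_const, Finset.card_range]; simp
    have hlast := unroll (m+1) (le_refl _)
    -- αH^(m+1) * Φ 0 ≤ Φ(m+1) + S * Rμ ≤ 2 (m+1) αH^m R μ
    have hRμpos : 0 < R * μ := mul_pos hRpos hμpos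
    have hcomb : αH^(m+1) * Φ 0 ≤ 2 * (m+1) * (αH^m * (R*μ)) := by
      have : (∑ i ∈ Finset.range (m+1), αH^i) * (R*μ) ≤ ((m+1) * αH^m) * (R*μ) :=
        mul_le_mul_of_nonneg_right hSsum (le_of_lt hRμpos)
      nlinarith [hlast, hΦtop]
    have ham0 : 0 < a m 0 := hapos m 0 (by omega) (by omega)
    have hμa := haL m 0 (by omega) (by omega)
    -- αH^(m+1) * αH^m * a m 0 ≤ 2(m+1) αH^m R μ < 2(m+1) αH^m R (R * a m 0)
    have hfin : αH^(m+1) * (αH^m * a m 0) < 2*(m+1) * R^2 * (αH^m * a m 0) := by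
      have h1 : αH^(m+1) * (αH^m * a m 0) ≤ αH^(m+1) * Φ 0 :=
        mul_le_mul_of_nonneg_left hΦ0 (by positivity)
      have h2 : 2 * (m+1) * (αH^m * (R*μ)) < 2*(m+1) * R^2 * (αH^m * a m 0) := by
        have hc : R * μ < R * (R * a m 0) := by
          exact mul_lt_mul_of_pos_left hμa hRpos
        have hp : (0:ℝ) < αH^m := pow_pos hα0 m
        nlinarith [mul_pos (show (0:ℝ) < 2*(m+1) by positivity) hp]
      linarith
    have hp : (0:ℝ) < αH^m * a m 0 := by positivity
    exact lt_of_mul_lt_mul_right hfin (le_of_lt hp)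

set_option maxHeartbeats 2000000 in
/-- for any α_H, α_G > 1 there is c > 0 and a family of n-node
positively weighted DAGs such that every positive reweighting in which each
α_H-approximate shortest path is an α_G-approximate shortest path of the
original graph has aspect ratio at least α_H^(c√n). -/
theorem stmt16 (αH αG : ℝ) (hH : 1 < αH) (hG : 1 < αG) :
    ∃ c : ℝ, 0 < c ∧ ∀ n : ℕ, 4 ≤ n →
      ∃ (E : Fin n → Fin n → Prop) (w : Fin n → Fin n → ℝ),
        (∃ f : Fin n → ℕ, ∀ i j, E i j → f i < f j) ∧
        (∀ i j, E i j → 0 < w i j) ∧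
        ∀ wH : Fin n → Fin n → ℝ, (∀ i j, E i j → 0 < wH i j) →
          (∀ p, IsApproxSP E wH αH p → IsApproxSP E w αG p) →
          ∃ i j k l, E i j ∧ E k l ∧ αH ^ (c * Real.sqrt n) * wH k l ≤ wH i j := by
  have hα0 : (0:ℝ) < αH := by linarith
  have hγ1 : 1 < Real.sqrt (Real.sqrt αH) := by
    have h1 : 1 < Real.sqrt αH := by
      rw [show (1:ℝ) = Real.sqrt 1 by simp]
      exact Real.sqrt_lt_sqrt (by norm_num) hH
    rw [show (1:ℝ) = Real.sqrt 1 by simp]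
    exact Real.sqrt_lt_sqrt (by norm_num) h1
  set γ : ℝ := Real.sqrt (Real.sqrt αH) with hγdef
  set δ : ℝ := γ - 1 with hδdef
  have hδpos : 0 < δ := by rw [hδdef]; linarith
  set K : ℕ := ⌈(8:ℝ)/δ^2⌉₊ + 4 with hKdef
  have hK4 : 4 ≤ K := by omega
  have hKpos : (0:ℝ) < (K:ℝ) := by
    have : (4:ℝ) ≤ (K:ℝ) := by exact_mod_cast hK4
    linarith
  set c0 : ℝ := min (1/8 : ℝ) (1/(2*(K:ℝ))) with hc0def
  have hc0pos : 0 < c0 := lt_min (by norm_num) (by positivity)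
  refine ⟨c0, hc0pos, ?_⟩
  intro n hn
  set k : ℕ := Nat.sqrt n with hkdef
  have hk2 : 2 ≤ k := Nat.le_sqrt.mpr (by omega)
  have hkn : k * k ≤ n := Nat.sqrt_le n
  have hsucc : n < (k+1) * (k+1) := Nat.lt_succ_sqrt n
  obtain ⟨m, hm⟩ : ∃ m, k = m + 2 := ⟨k - 2, by omega⟩
  have hn0 : 0 < n := by omega
  -- grid vertices, kept opaque
  have hvlt : ∀ s c : ℕ, s < k → c < k → s*k + c < k*k := by
    intro s c hs hc
    calc s*k + c < s*k + k := by omega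
      _ = (s+1)*k := by ring
      _ ≤ k*k := Nat.mul_le_mul_right k hs
  obtain ⟨v, hv⟩ : ∃ v : ℕ → ℕ → Fin n,
      ∀ s c : ℕ, s < k → c < k → (v s c).val = s*k + c := by
    refine ⟨fun s c => ⟨(s*k+c) % n, Nat.mod_lt _ hn0⟩, ?_⟩
    intro s c hs hc
    exact Nat.mod_eq_of_lt (lt_of_lt_of_le (hvlt s c hs hc) hkn)
  have hmodv : ∀ s c : ℕ, c < k → (s*k + c) % k = c := by
    intro s c hc
    rw [Nat.add_comm, Nat.add_mul_mod_self_right, Nat.mod_eq_of_lt hc]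
  have hsucm : ∀ s : ℕ, (s+1)*k = s*k + k := fun s => Nat.succ_mul s k
  have edgeR : ∀ s c : ℕ, s < k → c+1 < k → gE n k (v s c) (v s (c+1)) := by
    intro s c hs hc
    have h1 := hv s c hs (by omega)
    have h2 := hv s (c+1) hs hc
    have h3 := hvlt s c hs (by omega)
    have h4 := hvlt s (c+1) hs hc
    refine ⟨by omega, by omega, Or.inl ⟨by omega, ?_⟩⟩
    rw [h1, hmodv s c (by omega)]
    omega
  have edgeD : ∀ s c : ℕ, s+1 < k → c < k → gE n k (v s c) (v (s+1) c) := by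
    intro s c hs hc
    have h1 := hv s c (by omega) hc
    have h2 := hv (s+1) c hs hc
    have h3 := hvlt s c (by omega) hc
    have h4 := hvlt (s+1) c hs hc
    have h5 := hsucm s
    exact ⟨by omega, by omega, Or.inr (by omega)⟩
  -- the weight function of G, kept opaque
  have hαG0 : (0:ℝ) < 2*αG := by linarith
  obtain ⟨w, hwpos, hwR, hwD⟩ : ∃ w : Fin n → Fin n → ℝ,
      (∀ i j : Fin n, 0 < w i j) ∧
      (∀ i j : Fin n, j.val = i.val + 1 → w i j = 1) ∧
      (∀ i j : Fin n, j.val = i.val + k → w i j = (2*αG)^(i.val % k)) := by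
    refine ⟨fun i j => if j.val = i.val + 1 then (1:ℝ) else (2*αG)^(i.val % k),
      ?_, ?_, ?_⟩
    · intro i j; dsimp only; split
      · norm_num
      · positivity
    · intro i j hij; dsimp only; rw [if_pos hij]
    · intro i j hij; dsimp only; rw [if_neg (by omega)]
  refine ⟨gE n k, w, ⟨fun i => i.val, fun i j hij => gE_lt hk2 hij⟩,
    fun i j _ => hwpos i j, ?_⟩
  intro wH hWpos HP
  by_contra hcon
  push_neg at hcon
  set R : ℝ := αH ^ (c0 * Real.sqrt n) with hRdef
  -- KEY diamond inequalities
  have key : ∀ s c : ℕ, s ≤ m → c ≤ m →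
      αH * (wH (v s c) (v (s+1) c) + wH (v (s+1) c) (v (s+1) (c+1)))
        < wH (v s c) (v s (c+1)) + wH (v s (c+1)) (v (s+1) (c+1)) := by
    intro s c hs hc
    have e1 : gE n k (v s c) (v s (c+1)) := edgeR s c (by omega) (by omega)
    have e2 : gE n k (v s (c+1)) (v (s+1) (c+1)) := edgeD s (c+1) (by omega) (by omega)
    have e3 : gE n k (v s c) (v (s+1) c) := edgeD s c (by omega) (by omega)
    have e4 : gE n k (v (s+1) c) (v (s+1) (c+1)) := edgeR (s+1) c (by omega) (by omega)
    have hsm := hsucm s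
    have hv1 : (v s c).val = s*k + c := hv s c (by omega) (by omega)
    have hv2 : (v s (c+1)).val = s*k + (c+1) := hv s (c+1) (by omega) (by omega)
    have hv3 : (v (s+1) c).val = (s+1)*k + c := hv (s+1) c (by omega) (by omega)
    have hv4 : (v (s+1) (c+1)).val = (s+1)*k + (c+1) := hv (s+1) (c+1) (by omega) (by omega)
    have hqbpath : IsPath (gE n k) [v s c, v s (c+1), v (s+1) (c+1)] := ⟨e1, e2, trivial⟩
    have hqapath : IsPath (gE n k) [v s c, v (s+1) c, v (s+1) (c+1)] := ⟨e3, e4, trivial⟩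
    have hw1 : w (v s c) (v s (c+1)) = 1 := hwR _ _ (by omega)
    have hw2 : w (v s (c+1)) (v (s+1) (c+1)) = (2*αG)^(c+1) := by
      rw [hwD _ _ (by omega), hv2, hmodv s (c+1) (by omega)]
    have hw3 : w (v s c) (v (s+1) c) = (2*αG)^c := by
      rw [hwD _ _ (by omega), hv1, hmodv s c (by omega)]
    have hw4 : w (v (s+1) c) (v (s+1) (c+1)) = 1 := hwR _ _ (by omega)
    -- qb is not an αG-approximate shortest path in G
    have hnotG : ¬ IsApproxSP (gE n k) w αG [v s c, v s (c+1), v (s+1) (c+1)] := by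
      rintro ⟨-, hall⟩
      have hcmp := hall [v s c, v (s+1) c, v (s+1) (c+1)] hqapath rfl (by simp)
      simp only [pathWeight] at hcmp
      rw [hw1, hw2, hw3, hw4] at hcmp
      have hZ : (1:ℝ) ≤ (2*αG)^c := one_le_pow₀ (by linarith)
      rw [pow_succ] at hcmp
      nlinarith [hZ, hG]
    have hnotH : ¬ IsApproxSP (gE n k) wH αH [v s c, v s (c+1), v (s+1) (c+1)] :=
      fun hap => hnotG (HP _ hap)
    rw [IsApproxSP] at hnotH
    push_neg at hnotH
    obtain ⟨q, hq, hqh, hql, hqgt⟩ := hnotH hqbpath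
    obtain ⟨b, hqeq, hbval⟩ := path_diamond hk2 q hq (v s c) (v (s+1) (c+1))
      (by simpa using hqh) (by simpa using hql) (by omega)
    have hWqb : 0 < pathWeight wH [v s c, v s (c+1), v (s+1) (c+1)] := by
      simp only [pathWeight]
      have := hWpos _ _ e1
      have := hWpos _ _ e2
      linarith
    rcases hbval with hb | hb
    · -- q is qb itself : contradiction with αH > 1
      have hbeq : b = v s (c+1) := Fin.ext (by omega)
      rw [hqeq, hbeq] at hqgt
      nlinarith [hqgt, hWqb, hH]
    · -- q is qa : the key inequality
      have hbeq : b = v (s+1) c := Fin.ext (by omega)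
      rw [hqeq, hbeq] at hqgt
      simp only [pathWeight] at hqgt ⊢
      linarith
  -- apply the analytic core
  obtain ⟨hSMALL, hMAIN⟩ := core αH hH m
    (fun s c => wH (v s c) (v (s+1) c)) (fun s c => wH (v s c) (v s (c+1)))
    R (wH (v 0 0) (v 1 0)) rfl
    (fun s c hs hc => hWpos _ _ (edgeD s c (by omega) (by omega)))
    (fun s c hs hc => hWpos _ _ (edgeR s c (by omega) (by omega)))
    (fun s c hs hc => hcon _ _ _ _ (edgeD s c (by omega) (by omega))
      (edgeD 0 0 (by omega) (by omega)))
    (fun s c hs hc => hcon _ _ _ _ (edgeD 0 0 (by omega) (by omega))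
      (edgeD s c (by omega) (by omega)))
    (fun s c hs hc => hcon _ _ _ _ (edgeR s c (by omega) (by omega))
      (edgeD 0 0 (by omega) (by omega)))
    (fun s c hs hc => hcon _ _ _ _ (edgeD 0 0 (by omega) (by omega))
      (edgeR s c (by omega) (by omega)))
    key
  -- final arithmetic
  have hsq0 : (0:ℝ) ≤ Real.sqrt n := Real.sqrt_nonneg n
  have hsub : Real.sqrt n ≤ (k:ℝ) + 1 := by
    have h2 : (n:ℝ) ≤ ((k:ℝ)+1) * ((k:ℝ)+1) := by exact_mod_cast le_of_lt hsucc
    have h1 : (n:ℝ) ≤ ((k:ℝ)+1)^2 := by nlinarith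
    calc Real.sqrt n ≤ Real.sqrt (((k:ℝ)+1)^2) := Real.sqrt_le_sqrt h1
      _ = (k:ℝ)+1 := Real.sqrt_sq (by positivity)
  have hR2 : R^2 = αH ^ (2*(c0 * Real.sqrt n)) := by
    rw [show 2*(c0*Real.sqrt n) = c0*Real.sqrt n + c0*Real.sqrt n by ring,
      Real.rpow_add hα0, sq]
  by_cases hkK : K ≤ k
  · -- large k : contradict MAIN
    have hm2 : 2 ≤ m := by omega
    have hmR : (2:ℝ) ≤ (m:ℝ) := by exact_mod_cast hm2
    have hmδ : (8:ℝ)/δ^2 ≤ (m:ℝ) := by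
      refine le_trans (Nat.le_ceil _) ?_
      exact_mod_cast Nat.cast_le.mpr (show ⌈(8:ℝ)/δ^2⌉₊ ≤ m by omega)
    have t1 : (8:ℝ) ≤ (m:ℝ)*δ^2 := (div_le_iff₀ (by positivity)).mp hmδ
    have h8m : 8*(m:ℝ) ≤ ((m:ℝ)*δ)^2 := by
      nlinarith [mul_le_mul_of_nonneg_left t1 (show (0:ℝ) ≤ (m:ℝ) by linarith)]
    have hbern : 1 + (m:ℝ)*δ ≤ γ^m := by
      have h := one_add_mul_le_pow (show (-2:ℝ) ≤ δ by linarith) m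
      rw [show (1:ℝ) + δ = γ by rw [hδdef]; ring] at h
      linarith [h]
    have t2 : (1+(m:ℝ)*δ)^2 ≤ (γ^m)^2 := pow_le_pow_left₀ (by positivity) hbern 2
    have hmδ0 : (0:ℝ) ≤ (m:ℝ)*δ := by positivity
    have hA : 2*((m:ℝ)+1) ≤ (γ^m)^2 := by nlinarith [t2, h8m, hmR, hmδ0]
    have hγ4 : γ = αH ^ ((1:ℝ)/4) := by
      rw [hγdef, Real.sqrt_eq_rpow, Real.sqrt_eq_rpow, ← Real.rpow_mul (le_of_lt hα0)]
      norm_num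
    have hγm : (γ^m)^2 = αH ^ ((m:ℝ)/2) := by
      rw [show (γ^m)^2 = γ^(2*m) by ring, hγ4,
        ← Real.rpow_natCast (αH ^ ((1:ℝ)/4)) (2*m), ← Real.rpow_mul (le_of_lt hα0)]
      congr 1
      push_cast
      ring
    have hB : R^2 ≤ αH ^ ((k:ℝ)/2) := by
      rw [hR2]
      refine Real.rpow_le_rpow_of_exponent_le (le_of_lt hH) ?_
      have hc18 : c0 ≤ 1/8 := min_le_left _ _
      have hkR : (2:ℝ) ≤ (k:ℝ) := by exact_mod_cast hk2
      have h1 : c0 * Real.sqrt n ≤ (1/8) * ((k:ℝ)+1) :=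
        mul_le_mul hc18 hsub hsq0 (by norm_num)
      linarith
    have hprod : 2*((m:ℝ)+1) * R^2 ≤ αH ^ (m+1) := by
      have h1 : 2*((m:ℝ)+1) * R^2 ≤ (αH ^ ((m:ℝ)/2)) * (αH ^ ((k:ℝ)/2)) := by
        rw [← hγm]
        exact mul_le_mul hA hB (sq_nonneg R) (sq_nonneg _)
      have h2 : (αH ^ ((m:ℝ)/2)) * (αH ^ ((k:ℝ)/2)) = αH ^ (m+1) := by
        rw [← Real.rpow_add hα0, ← Real.rpow_natCast αH (m+1)]
        congr 1
        rw [hm]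
        push_cast
        ring
      linarith [h1, h2.le, h2.ge]
    linarith [hMAIN, hprod]
  · -- small k : contradict SMALL
    push_neg at hkK
    have hkK'' : k + 1 ≤ K := hkK
    have hkK' : (k:ℝ) + 1 ≤ (K:ℝ) := by exact_mod_cast hkK''
    have hc1K : c0 ≤ 1/(2*(K:ℝ)) := min_le_right _ _
    have hexp : 2*(c0 * Real.sqrt n) ≤ 1 := by
      have h1 : c0 * Real.sqrt n ≤ (1/(2*(K:ℝ))) * (K:ℝ) := by
        refine mul_le_mul hc1K (le_trans hsub hkK') hsq0 (by positivity)
      have h2 : (1/(2*(K:ℝ))) * (K:ℝ) = 1/2 := by field_simp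
      linarith
    have hR2le : R^2 ≤ αH := by
      rw [hR2]
      calc αH ^ (2*(c0 * Real.sqrt n)) ≤ αH ^ (1:ℝ) :=
            Real.rpow_le_rpow_of_exponent_le (le_of_lt hH) hexp
        _ = αH := Real.rpow_one αH
    linarith [hSMALL, hR2le]
end

section
/- In the undirected 5-cycle construction with cross-cycle edges from C_i to C_{i+1} of weight 1/3^{i-1} and cycle-C_i edges of weight 1/3^i, each canonical 3-edge path (cross-cycle edge from v_i^k to v_{i+1}^j, then two cycle edges of C_{i+1}) of weight 1/3^{i-1} + 2/3^{i+1} is the unique (13/12)-approximate shortest path between its endpoints: every other path P' between the same endpoints satisfies w(P') > (13/12)·(1/3^{i-1} + 2/3^{i+1}). -/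
/-- Cross-edge pattern of the undirected construction: the cross edge from
v_i^k goes to v_{i+1}^{2k} (superscripts mod 5). -/
def cross5 (k : Fin 5) : Fin 5 := 2 * k

/-- Edges (symmetric) of the undirected lower-bound construction: the 5-cycle
edges of C_i (1 ≤ i ≤ m) and the cross-cycle edges v_i^k — v_{i+1}^{2k}. -/
def undirE (m : ℕ) (u v : ℕ × Fin 5) : Prop :=
  (u.1 = v.1 ∧ 1 ≤ u.1 ∧ u.1 ≤ m ∧ (v.2 = u.2 + 1 ∨ u.2 = v.2 + 1)) ∨
  (v.1 = u.1 + 1 ∧ 1 ≤ u.1 ∧ u.1 + 1 ≤ m ∧ v.2 = cross5 u.2) ∨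
  (u.1 = v.1 + 1 ∧ 1 ≤ v.1 ∧ v.1 + 1 ≤ m ∧ u.2 = cross5 v.2)

/-- Weights for the approximate undirected construction: edges of C_i weigh
1/3^i, cross-cycle edges between C_i and C_{i+1} weigh 1/3^{i-1}. -/
noncomputable def undirW18 (u v : ℕ × Fin 5) : ℝ :=
  if u.1 = v.1 then (1 : ℝ) / 3 ^ u.1 else (1 : ℝ) / 3 ^ (min u.1 v.1 - 1)

/-!
Let `t = v_{i+1}^{2k+2}` and measure everything in units `1/3^(i+1)`, the weight of an edge of
`C_{i+1}`. The potential `φ` is the cycle distance to `t` on `C_{i+1}`, that plus the cross edge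
`1/3^(i-1)` on `C_i`, and `0` elsewhere. It changes by at most the weight along every edge (this
is where the geometric weights enter: cross edges between `C_{i-1}` and `C_i` weigh 27 units, those
between `C_{i+1}` and `C_{i+2}` weigh 3), so every path from `v` to `t` weighs at least `φ v`.
The canonical path is tight for `φ`, and every other edge leaving one of its vertices loses at
least one unit. Hence every other path from `v_i^k` to `t` weighs at least `φ(v_i^k) + 1` unit,
i.e. `1/3^(i-1) + 1/3^i > (13/12) (1/3^(i-1) + 2/3^(i+1))`.
-/

section PathWeight

variable {V : Type} {E : V → V → Prop} {w : V → V → ℝ} {φ : V → ℝ}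

theorem sub_le_pathWeight (hφ : ∀ u v, E u v → φ u - φ v ≤ w u v) {t : V} :
    ∀ (a : V) (q : List V), IsPath E (a :: q) → (a :: q).getLast? = some t →
      φ a - φ t ≤ pathWeight w (a :: q)
  | a, [], _, hlast => by simp_all [pathWeight]
  | a, b :: q, ⟨hab, hq⟩, hlast => by
    have := sub_le_pathWeight hφ b q hq (by simpa using hlast)
    have := hφ a b hab
    simp only [pathWeight]
    linarith

theorem add_le_pathWeight_of_add_le (hφ : ∀ u v, E u v → φ u - φ v ≤ w u v) {t a b : V}
    {δ : ℝ} {q : List V} (hq : IsPath E (a :: b :: q)) (hlast : (b :: q).getLast? = some t)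
    (hab : φ a + δ ≤ w a b + φ b) :
    φ a - φ t + δ ≤ pathWeight w (a :: b :: q) := by
  have := sub_le_pathWeight hφ b q hq.2 hlast
  simp only [pathWeight]
  linarith

theorem add_le_pathWeight_of_ne (hφ : ∀ u v, E u v → φ u - φ v ≤ w u v) {t : V} {δ : ℝ}
    (a : V) (p : List V) (hnd : (a :: p).Nodup) (hlast : (a :: p).getLast? = some t)
    (hslack : ∀ x ∈ a :: p, ∀ b, E x b → [x, b] <:+: a :: p ∨ φ x + δ ≤ w x b + φ b)
    (q : List V) (hq : IsPath E (a :: q)) (hqlast : (a :: q).getLast? = some t) (hne : q ≠ p) :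
    φ a - φ t + δ ≤ pathWeight w (a :: q) := by
  induction p generalizing a q with
  | nil =>
    obtain _ | ⟨b, q⟩ := q
    · exact absurd rfl hne
    obtain rfl : a = t := by simpa using hlast
    refine add_le_pathWeight_of_add_le hφ hq (by simpa using hqlast) ?_
    refine (hslack a (by simp) b hq.1).resolve_left fun h => ?_
    simpa using h.length_le
  | cons c p ih =>
    have ha : a ∉ c :: p := (List.nodup_cons.1 hnd).1
    obtain _ | ⟨b, q⟩ := q
    · obtain rfl : a = t := by simpa using hqlast
      exact (ha (List.mem_of_getLast? hlast)).elim
    rcases hslack a (by simp) b hq.1 with h | h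
    · obtain rfl : b = c := by
        rcases List.infix_cons_iff.1 h with h | h
        · simpa using h
        · exact (ha (h.subset (by simp))).elim
      have hslack' : ∀ x ∈ b :: p, ∀ y, E x y → [x, y] <:+: b :: p ∨ φ x + δ ≤ w x y + φ y := by
        intro x hx y hxy
        refine (hslack x (List.mem_cons_of_mem a hx) y hxy).imp_left fun h => ?_
        rcases List.infix_cons_iff.1 h with h | h
        · obtain ⟨rfl, -⟩ := List.cons_prefix_cons.1 h
          exact (ha hx).elim
        · exact h
      have := ih b (List.nodup_cons.1 hnd).2 (by simpa using hlast) hslack' q hq.2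
        (by simpa using hqlast) (fun h => hne (h ▸ rfl))
      have := hφ a b hq.1
      simp only [pathWeight]
      linarith
    · exact add_le_pathWeight_of_add_le hφ hq (by simpa using hqlast) h

end PathWeight

open Fin.CommRing

def cycleDist (y z : Fin 5) : ℕ := min (y - z).val (z - y).val

theorem cycleDist_le_two : ∀ y z : Fin 5, cycleDist y z ≤ 2 := by decide

theorem abs_cycleDist_sub_cycleDist_succ_le :
    ∀ y z : Fin 5, |(cycleDist y z : ℤ) - cycleDist (y + 1) z| ≤ 1 := by
  decide

theorem cycleDist_cross5_add_two : ∀ k : Fin 5, cycleDist (cross5 k) (cross5 k + 2) = 2 := by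
  decide

theorem cycleDist_lt_of_adj : ∀ k z : Fin 5,
    ((z = cross5 k + 1 ∨ cross5 k = z + 1) →
        cycleDist z (cross5 k + 2) < cycleDist (cross5 k) (cross5 k + 2) → z = cross5 k + 1) ∧
      ((z = cross5 k + 1 + 1 ∨ cross5 k + 1 = z + 1) →
        cycleDist z (cross5 k + 2) < cycleDist (cross5 k + 1) (cross5 k + 2) → z = cross5 k + 2) ∧
      ¬cycleDist z (cross5 k + 2) < cycleDist (cross5 k + 2) (cross5 k + 2) := by
  decide

theorem undirW18_comm (u v : ℕ × Fin 5) : undirW18 u v = undirW18 v u := by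
  unfold undirW18; split_ifs <;> simp_all [min_comm]

theorem undirW18_same_level (a : ℕ) (x y : Fin 5) : undirW18 (a, x) (a, y) = 1 / 3 ^ a := by
  simp [undirW18]

theorem undirW18_succ_level (a : ℕ) (x y : Fin 5) :
    undirW18 (a, x) (a + 1, y) = 1 / 3 ^ (a - 1) := by
  simp [undirW18]

section Potential

variable (i : ℕ) (k : Fin 5)

noncomputable def cycleTargetDist (y : Fin 5) : ℝ := cycleDist y (cross5 k + 2) / 3 ^ (i + 1)

/-- The distance to `(i + 1, cross5 k + 2)` within `C_i ∪ C_{i+1}`. -/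
noncomputable def targetPotential (v : ℕ × Fin 5) : ℝ :=
  if v.1 = i then 1 / 3 ^ (i - 1) + cycleTargetDist i k (cross5 v.2)
  else if v.1 = i + 1 then cycleTargetDist i k v.2 else 0

def canonicalPath : List (ℕ × Fin 5) :=
  [(i, k), (i + 1, cross5 k), (i + 1, cross5 k + 1), (i + 1, cross5 k + 2)]

theorem cycleTargetDist_nonneg (y : Fin 5) : 0 ≤ cycleTargetDist i k y := by
  unfold cycleTargetDist; positivity

theorem cycleTargetDist_le (y : Fin 5) : cycleTargetDist i k y ≤ 2 / 3 ^ (i + 1) := by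
  unfold cycleTargetDist
  gcongr
  exact_mod_cast cycleDist_le_two _ _

theorem targetPotential_same_level (x : Fin 5) :
    targetPotential i k (i, x) = 1 / 3 ^ (i - 1) + cycleTargetDist i k (cross5 x) := by
  simp [targetPotential]

theorem targetPotential_succ_level (y : Fin 5) :
    targetPotential i k (i + 1, y) = cycleTargetDist i k y := by
  simp [targetPotential]

theorem targetPotential_of_ne {a : ℕ} (x : Fin 5) (h : a ≠ i) (h' : a ≠ i + 1) :
    targetPotential i k (a, x) = 0 := by
  simp [targetPotential, h, h']

theorem targetPotential_source :
    targetPotential i k (i, k) = 1 / 3 ^ (i - 1) + 2 / 3 ^ (i + 1) := by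
  simp [targetPotential_same_level, cycleTargetDist, cycleDist_cross5_add_two]

theorem targetPotential_target : targetPotential i k (i + 1, cross5 k + 2) = 0 := by
  simp [targetPotential_succ_level, cycleTargetDist, cycleDist]

theorem targetPotential_nonneg (v : ℕ × Fin 5) : 0 ≤ targetPotential i k v := by
  unfold targetPotential
  split_ifs
  · exact add_nonneg (by positivity) (cycleTargetDist_nonneg i k _)
  · exact cycleTargetDist_nonneg i k _
  · exact le_rfl

theorem targetPotential_le (v : ℕ × Fin 5) :
    targetPotential i k v ≤ 1 / 3 ^ (i - 1) + 2 / 3 ^ (i + 1) := by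
  have := cycleTargetDist_le i k
  unfold targetPotential
  split_ifs
  · linarith [this (cross5 v.2)]
  · linarith [this v.2, show (0 : ℝ) ≤ 1 / 3 ^ (i - 1) by positivity]
  · positivity

theorem targetPotential_le_of_ne (v : ℕ × Fin 5) (h : v.1 ≠ i) :
    targetPotential i k v ≤ 2 / 3 ^ (i + 1) := by
  unfold targetPotential
  split_ifs
  · contradiction
  · exact cycleTargetDist_le i k _
  · positivity

theorem abs_targetPotential_sub_le_of_cycle (a : ℕ) (x : Fin 5) :
    |targetPotential i k (a, x) - targetPotential i k (a, x + 1)| ≤ 1 / 3 ^ a := by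
  by_cases hi : a = i
  · subst hi
    rw [targetPotential_same_level, targetPotential_same_level, add_sub_add_left_eq_sub]
    refine (abs_sub_le_of_nonneg_of_le (cycleTargetDist_nonneg ..) (cycleTargetDist_le ..)
      (cycleTargetDist_nonneg ..) (cycleTargetDist_le ..)).trans ?_
    rw [pow_succ]; field_simp; norm_num
  by_cases hi' : a = i + 1
  · subst hi'
    rw [targetPotential_succ_level, targetPotential_succ_level]
    unfold cycleTargetDist
    rw [← sub_div, abs_div, abs_of_pos (by positivity : (0 : ℝ) < 3 ^ (i + 1))]
    refine div_le_div_of_nonneg_right ?_ (by positivity)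
    exact_mod_cast abs_cycleDist_sub_cycleDist_succ_le x (cross5 k + 2)
  rw [targetPotential_of_ne i k _ hi hi', targetPotential_of_ne i k _ hi hi', sub_zero, abs_zero]
  positivity

theorem abs_targetPotential_sub_le_of_cross {a : ℕ} (ha : 1 ≤ a) (x : Fin 5) :
    |targetPotential i k (a, x) - targetPotential i k (a + 1, cross5 x)| ≤ 1 / 3 ^ (a - 1) := by
  by_cases hi : a = i
  · subst hi
    rw [targetPotential_same_level, targetPotential_succ_level, add_sub_cancel_right,
      abs_of_pos (by positivity)]
  by_cases hi' : a + 1 = i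
  · subst hi'
    rw [targetPotential_of_ne _ _ _ hi (by omega)]
    refine abs_sub_le_of_nonneg_of_le le_rfl (by positivity) (targetPotential_nonneg ..)
      ((targetPotential_le ..).trans ?_)
    obtain ⟨b, rfl⟩ : ∃ b, a = b + 1 := ⟨a - 1, by omega⟩
    simp only [pow_succ, Nat.add_sub_cancel]; field_simp; norm_num
  by_cases hi'' : a = i + 1
  · subst hi''
    rw [targetPotential_of_ne (a := i + 1 + 1) i k _ (by omega) (by omega)]
    refine abs_sub_le_of_nonneg_of_le (targetPotential_nonneg ..)
      ((targetPotential_le_of_ne _ _ _ hi).trans ?_) le_rfl (by positivity)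
    rw [Nat.add_sub_cancel, pow_succ]; field_simp; norm_num
  rw [targetPotential_of_ne i k _ hi hi'', targetPotential_of_ne i k _ hi' (by omega), sub_zero,
    abs_zero]
  positivity

theorem targetPotential_sub_le_undirW18 (m : ℕ) {u v : ℕ × Fin 5} (h : undirE m u v) :
    targetPotential i k u - targetPotential i k v ≤ undirW18 u v := by
  obtain ⟨a, x⟩ := u
  obtain ⟨b, y⟩ := v
  simp only [undirE] at h
  rcases h with ⟨rfl, -, -, rfl | rfl⟩ | ⟨rfl, ha, -, rfl⟩ | ⟨rfl, hb, -, rfl⟩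
  · rw [undirW18_same_level]
    exact (abs_sub_le_iff.1 (abs_targetPotential_sub_le_of_cycle i k a x)).1
  · rw [undirW18_same_level]
    exact (abs_sub_le_iff.1 (abs_targetPotential_sub_le_of_cycle i k a y)).2
  · rw [undirW18_succ_level]
    exact (abs_sub_le_iff.1 (abs_targetPotential_sub_le_of_cross i k ha x)).1
  · rw [undirW18_comm, undirW18_succ_level]
    exact (abs_sub_le_iff.1 (abs_targetPotential_sub_le_of_cross i k hb y)).2

theorem eq_or_targetPotential_add_le_of_source {m : ℕ} {b : ℕ × Fin 5}
    (h : undirE m (i, k) b) :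
    b = (i + 1, cross5 k) ∨
      targetPotential i k (i, k) + 1 / 3 ^ (i + 1) ≤ undirW18 (i, k) b + targetPotential i k b := by
  obtain ⟨c, z⟩ := b
  have hs := targetPotential_le i k (i, k)
  simp only [undirE] at h
  rcases h with ⟨rfl, -, -, -⟩ | ⟨rfl, -, -, rfl⟩ | ⟨rfl, hc, -, -⟩
  · right
    rw [undirW18_same_level, targetPotential_same_level i k z]
    have : (2 : ℝ) / 3 ^ (i + 1) + 1 / 3 ^ (i + 1) ≤ 1 / 3 ^ i := by
      rw [pow_succ]; field_simp; norm_num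
    linarith [cycleTargetDist_nonneg i k (cross5 z)]
  · exact Or.inl rfl
  · right
    rw [undirW18_comm, undirW18_succ_level,
      targetPotential_of_ne (a := c) _ _ _ (by omega) (by omega)]
    obtain ⟨d, rfl⟩ : ∃ d, c = d + 1 := ⟨c - 1, by omega⟩
    have : (1 : ℝ) / 3 ^ (d + 1 + 1 - 1) + 2 / 3 ^ (d + 1 + 1 + 1) + 1 / 3 ^ (d + 1 + 1 + 1) ≤
        1 / 3 ^ (d + 1 - 1) := by
      simp only [pow_succ, Nat.add_sub_cancel]; field_simp; norm_num
    linarith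

theorem closer_or_targetPotential_add_le_of_succ_level {m : ℕ} {y : Fin 5} {b : ℕ × Fin 5}
    (h : undirE m (i + 1, y) b) :
    (b.1 = i + 1 ∧ (b.2 = y + 1 ∨ y = b.2 + 1) ∧
        cycleDist b.2 (cross5 k + 2) < cycleDist y (cross5 k + 2)) ∨
      targetPotential i k (i + 1, y) + 1 / 3 ^ (i + 1) ≤
        undirW18 (i + 1, y) b + targetPotential i k b := by
  obtain ⟨c, z⟩ := b
  simp only [undirE] at h
  by_cases hc : c = i + 1
  · subst hc
    have hyz : z = y + 1 ∨ y = z + 1 := by omega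
    rw [targetPotential_succ_level, targetPotential_succ_level, undirW18_same_level]
    by_cases hd : cycleDist z (cross5 k + 2) < cycleDist y (cross5 k + 2)
    · exact Or.inl ⟨rfl, hyz, hd⟩
    right
    unfold cycleTargetDist
    rw [← add_div, ← add_div]
    refine div_le_div_of_nonneg_right ?_ (by positivity)
    exact_mod_cast (by omega : cycleDist y (cross5 k + 2) + 1 ≤ 1 + cycleDist z (cross5 k + 2))
  right
  have hw : 1 / 3 ^ i ≤ undirW18 (i + 1, y) (c, z) := by
    rcases h with ⟨h, -⟩ | ⟨rfl, -⟩ | ⟨h, -⟩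
    · omega
    · rw [undirW18_succ_level, Nat.add_sub_cancel]
    · obtain rfl : i = c := by omega
      rw [undirW18_comm, undirW18_succ_level]
      exact one_div_pow_le_one_div_pow_of_le (by norm_num) (Nat.sub_le i 1)
  have : (2 : ℝ) / 3 ^ (i + 1) + 1 / 3 ^ (i + 1) ≤ 1 / 3 ^ i := by
    rw [pow_succ]; field_simp; norm_num
  linarith [targetPotential_le_of_ne i k (i + 1, y) (by simp), targetPotential_nonneg i k (c, z)]

theorem infix_or_targetPotential_add_le_of_mem_canonicalPath {m : ℕ} {x b : ℕ × Fin 5}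
    (hx : x ∈ canonicalPath i k) (h : undirE m x b) :
    [x, b] <:+: canonicalPath i k ∨
      targetPotential i k x + 1 / 3 ^ (i + 1) ≤ undirW18 x b + targetPotential i k b := by
  have hk := cycleDist_lt_of_adj k b.2
  simp only [canonicalPath, List.mem_cons, List.not_mem_nil, or_false] at hx
  rcases hx with rfl | rfl | rfl | rfl
  · refine (eq_or_targetPotential_add_le_of_source i k h).imp_left ?_
    rintro rfl
    exact ⟨[], _, rfl⟩
  all_goals refine (closer_or_targetPotential_add_le_of_succ_level i k h).imp_left ?_
  all_goals rintro ⟨hb, hadj, hd⟩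
  · obtain rfl : b = (i + 1, cross5 k + 1) := Prod.ext hb (hk.1 hadj hd)
    exact ⟨[_], [_], rfl⟩
  · obtain rfl : b = (i + 1, cross5 k + 2) := Prod.ext hb (hk.2.1 hadj hd)
    exact ⟨[_, _], [], rfl⟩
  · exact (hk.2.2 hd).elim

theorem add_le_pathWeight_of_ne_canonicalPath {m : ℕ} (q : List (ℕ × Fin 5))
    (hq : IsPath (undirE m) ((i, k) :: q))
    (hlast : ((i, k) :: q).getLast? = some (i + 1, cross5 k + 2))
    (hne : (i, k) :: q ≠ canonicalPath i k) :
    1 / 3 ^ (i - 1) + 2 / 3 ^ (i + 1) + 1 / 3 ^ (i + 1) ≤ pathWeight undirW18 ((i, k) :: q) := by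
  have hnd : (canonicalPath i k).Nodup := by simp [canonicalPath]
  have := add_le_pathWeight_of_ne (t := (i + 1, cross5 k + 2))
    (fun _ _ h => targetPotential_sub_le_undirW18 i k m h) (i, k) _ hnd rfl
    (fun _ hx _ h => infix_or_targetPotential_add_le_of_mem_canonicalPath i k hx h)
    q hq hlast (fun h => hne (h ▸ rfl))
  rwa [targetPotential_source, targetPotential_target, sub_zero] at this

end Potential

/-- each canonical 3-edge path (cross edge from v_i^k to
v_{i+1}^{2k}, then two cycle edges of C_{i+1}) has weight 1/3^{i-1} + 2/3^{i+1}
and is the unique (13/12)-approximate shortest path between its endpoints. -/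
theorem stmt18 (m i : ℕ) (hi : 1 ≤ i) (him : i + 1 ≤ m) (k : Fin 5) :
    IsPath (undirE m)
      [((i, k) : ℕ × Fin 5), (i + 1, cross5 k), (i + 1, cross5 k + 1), (i + 1, cross5 k + 2)] ∧
    pathWeight undirW18
      [((i, k) : ℕ × Fin 5), (i + 1, cross5 k), (i + 1, cross5 k + 1), (i + 1, cross5 k + 2)]
        = 1 / 3 ^ (i - 1) + 2 / 3 ^ (i + 1) ∧
    ∀ q : List (ℕ × Fin 5), IsPath (undirE m) q →
      q.head? = some ((i, k) : ℕ × Fin 5) →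
      q.getLast? = some ((i + 1, cross5 k + 2) : ℕ × Fin 5) →
      q ≠ [((i, k) : ℕ × Fin 5), (i + 1, cross5 k), (i + 1, cross5 k + 1), (i + 1, cross5 k + 2)] →
      pathWeight undirW18 q > (13 / 12 : ℝ) * (1 / 3 ^ (i - 1) + 2 / 3 ^ (i + 1)) := by
  refine ⟨⟨Or.inr (Or.inl ⟨rfl, hi, him, rfl⟩), Or.inl ⟨rfl, by omega, him, Or.inl rfl⟩,
    Or.inl ⟨rfl, by omega, him, Or.inl (by ring)⟩, trivial⟩, ?_, ?_⟩
  · simp only [pathWeight, undirW18_succ_level, undirW18_same_level]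
    ring
  rintro (_ | ⟨a, q⟩) hq hhead hlast hne
  · exact hq.elim
  obtain rfl : a = (i, k) := by simpa using hhead
  refine lt_of_lt_of_le ?_ (add_le_pathWeight_of_ne_canonicalPath i k q hq hlast hne)
  obtain ⟨j, rfl⟩ : ∃ j, i = j + 1 := ⟨i - 1, by omega⟩
  simp only [pow_succ, Nat.add_sub_cancel]; field_simp; norm_num
end
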